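/- arXiv:math-ph/0207047 — 5 statements merged into one kernel-verified Lean document; each statement's English description precedes it below -/
import Mathlib

section
/- Let h be a complex Hilbert space and (H_j)_{j∈ℕ} bounded operators on h such that there is a constant C ≥ 0 with ∑_j ‖H_j u‖² ≤ C‖u‖² for all u ∈ h. Then for every bounded operator a on h there exists a bounded operator ψ(a) on h such that ⟪u, ψ(a) v⟫ = ∑_j ⟪H_j u, a (H_j v)⟫ for all u, v ∈ h, and moreover ‖ψ(a)‖ ≤ C‖a‖; if in addition a is positive, then ψ(a) is positive. -/
open scoped ComplexConjugate

section aux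
variable {h : Type*} [NormedAddCommGroup h] [InnerProductSpace ℂ h] [CompleteSpace h]

omit [CompleteSpace h] in
lemma aux_cs (H : ℕ → h →L[ℂ] h) (C : ℝ) (hC : 0 ≤ C)
    (hsum : ∀ u : h, Summable fun j => ‖H j u‖ ^ 2)
    (hbound : ∀ u : h, ∑' j, ‖H j u‖ ^ 2 ≤ C * ‖u‖ ^ 2) (u v : h) :
    Summable (fun j => ‖H j u‖ * ‖H j v‖) ∧
      ∑' j, ‖H j u‖ * ‖H j v‖ ≤ C * (‖u‖ * ‖v‖) := by
  have hS : Summable (fun j => ‖H j u‖ * ‖H j v‖) := by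
    apply Summable.of_nonneg_of_le (fun j => by positivity)
      (fun j => ?_) (((hsum u).add (hsum v)).div_const 2)
    have := two_mul_le_add_sq ‖H j u‖ ‖H j v‖
    show ‖H j u‖ * ‖H j v‖ ≤ (‖H j u‖ ^ 2 + ‖H j v‖ ^ 2) / 2
    nlinarith
  refine ⟨hS, ?_⟩
  apply Summable.tsum_le_of_sum_le hS
  intro s
  calc ∑ j ∈ s, ‖H j u‖ * ‖H j v‖
      ≤ Real.sqrt (∑ j ∈ s, ‖H j u‖ ^ 2) * Real.sqrt (∑ j ∈ s, ‖H j v‖ ^ 2) :=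
        Real.sum_mul_le_sqrt_mul_sqrt s _ _
    _ ≤ Real.sqrt (C * ‖u‖ ^ 2) * Real.sqrt (C * ‖v‖ ^ 2) := by
        gcongr <;>
          exact le_trans (Summable.sum_le_tsum s (fun j _ => by positivity) (hsum _)) (hbound _)
    _ = C * (‖u‖ * ‖v‖) := by
        rw [Real.sqrt_mul hC, Real.sqrt_sq (norm_nonneg _), Real.sqrt_mul hC,
          Real.sqrt_sq (norm_nonneg _)]
        rw [show Real.sqrt C * ‖u‖ * (Real.sqrt C * ‖v‖)
            = (Real.sqrt C * Real.sqrt C) * (‖u‖ * ‖v‖) by ring,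
          Real.mul_self_sqrt hC]
end aux

/-- If `(H_j)` are bounded operators on a complex Hilbert space with
`∑_j ‖H_j u‖² ≤ C ‖u‖²` for all `u`, then for every bounded operator `a` there is a bounded
operator `ψ(a)` with `⟪u, ψ(a) v⟫ = ∑_j ⟪H_j u, a (H_j v)⟫`, `‖ψ(a)‖ ≤ C ‖a‖`, and `ψ(a)`
is positive whenever `a` is positive. -/
theorem stmt_1 {h : Type*} [NormedAddCommGroup h] [InnerProductSpace ℂ h] [CompleteSpace h]
    (H : ℕ → h →L[ℂ] h) (C : ℝ) (hC : 0 ≤ C)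
    (hsum : ∀ u : h, Summable fun j => ‖H j u‖ ^ 2)
    (hbound : ∀ u : h, ∑' j, ‖H j u‖ ^ 2 ≤ C * ‖u‖ ^ 2) :
    ∀ a : h →L[ℂ] h, ∃ ψa : h →L[ℂ] h,
      (∀ u v : h,
        HasSum (fun j => (inner ℂ (H j u) (a (H j v)) : ℂ)) (inner ℂ u (ψa v))) ∧
      ‖ψa‖ ≤ C * ‖a‖ ∧
      ((IsSelfAdjoint a ∧ ∀ u : h, 0 ≤ (inner ℂ u (a u) : ℂ).re) →
        (IsSelfAdjoint ψa ∧ ∀ u : h, 0 ≤ (inner ℂ u (ψa u) : ℂ).re)) := by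
  intro a
  have key := aux_cs H C hC hsum hbound
  have hterm : ∀ v u : h, ∀ j,
      ‖(inner ℂ (a (H j v)) (H j u) : ℂ)‖ ≤ ‖a‖ * (‖H j u‖ * ‖H j v‖) := by
    intro v u j
    calc ‖(inner ℂ (a (H j v)) (H j u) : ℂ)‖ ≤ ‖a (H j v)‖ * ‖H j u‖ := norm_inner_le_norm _ _
      _ ≤ (‖a‖ * ‖H j v‖) * ‖H j u‖ := by
          gcongr; exact ContinuousLinearMap.le_opNorm a _
      _ = ‖a‖ * (‖H j u‖ * ‖H j v‖) := by ring
  have hsummG : ∀ v u : h, Summable (fun j => (inner ℂ (a (H j v)) (H j u) : ℂ)) := by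
    intro v u
    apply Summable.of_norm
    exact Summable.of_nonneg_of_le (fun j => norm_nonneg _) (hterm v u)
      (((key u v).1).mul_left ‖a‖)
  -- the linear functional u ↦ ∑' j, ⟪a (H j v), H j u⟫
  have Gdef : ∀ v : h, ∃ G : h →L[ℂ] ℂ,
      (∀ u, G u = ∑' j, (inner ℂ (a (H j v)) (H j u) : ℂ)) ∧ ‖G‖ ≤ C * ‖a‖ * ‖v‖ := by
    intro v
    have hGbound : ∀ u : h,
        ‖∑' j, (inner ℂ (a (H j v)) (H j u) : ℂ)‖ ≤ C * ‖a‖ * ‖v‖ * ‖u‖ := by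
      intro u
      calc ‖∑' j, (inner ℂ (a (H j v)) (H j u) : ℂ)‖
          ≤ ∑' j, ‖(inner ℂ (a (H j v)) (H j u) : ℂ)‖ :=
            norm_tsum_le_tsum_norm ((hsummG v u).norm)
        _ ≤ ∑' j, ‖a‖ * (‖H j u‖ * ‖H j v‖) :=
            Summable.tsum_le_tsum (hterm v u) ((hsummG v u).norm) (((key u v).1).mul_left ‖a‖)
        _ = ‖a‖ * ∑' j, ‖H j u‖ * ‖H j v‖ := tsum_mul_left
        _ ≤ ‖a‖ * (C * (‖u‖ * ‖v‖)) :=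
            mul_le_mul_of_nonneg_left (key u v).2 (norm_nonneg a)
        _ = C * ‖a‖ * ‖v‖ * ‖u‖ := by ring
    let G₀ : h →ₗ[ℂ] ℂ :=
      { toFun := fun u => ∑' j, (inner ℂ (a (H j v)) (H j u) : ℂ)
        map_add' := fun u w => by
          simp_rw [map_add, inner_add_right]
          exact Summable.tsum_add (hsummG v u) (hsummG v w)
        map_smul' := fun c u => by
          simp_rw [map_smul, inner_smul_right, RingHom.id_apply]
          exact tsum_mul_left }
    exact ⟨LinearMap.mkContinuous G₀ (C * ‖a‖ * ‖v‖) hGbound, fun u => rfl,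
      LinearMap.mkContinuous_norm_le _ (by positivity) _⟩
  choose G hG hGnorm using Gdef
  set ψraw : h → h := fun v => (InnerProductSpace.toDual ℂ h).symm (G v) with hψraw
  have hψinner : ∀ v u : h,
      (inner ℂ (ψraw v) u : ℂ) = ∑' j, (inner ℂ (a (H j v)) (H j u) : ℂ) := by
    intro v u
    rw [hψraw]
    rw [InnerProductSpace.toDual_symm_apply]
    exact hG v u
  have hψinner' : ∀ u v : h,
      HasSum (fun j => (inner ℂ (H j u) (a (H j v)) : ℂ)) (inner ℂ u (ψraw v)) := by
    intro u v
    have h1 := (hsummG v u).hasSum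
    have h2 := h1.star
    have h3 : (fun j => star (inner ℂ (a (H j v)) (H j u) : ℂ))
        = fun j => (inner ℂ (H j u) (a (H j v)) : ℂ) := by
      funext j; exact inner_conj_symm _ _
    rw [h3] at h2
    convert h2 using 1
    rw [← inner_conj_symm, hψinner]
    rfl
  have hψadd : ∀ v w : h, ψraw (v + w) = ψraw v + ψraw w := by
    intro v w
    have : G (v + w) = G v + G w := by
      ext u
      simp only [ContinuousLinearMap.add_apply, hG]
      simp_rw [map_add, inner_add_left]
      exact Summable.tsum_add (hsummG v u) (hsummG w u)
    rw [hψraw]; simp only [this, map_add]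
  have hψsmul : ∀ (c : ℂ) (v : h), ψraw (c • v) = c • ψraw v := by
    intro c v
    have : G (c • v) = (starRingEnd ℂ c) • G v := by
      ext u
      simp only [ContinuousLinearMap.smul_apply, hG, smul_eq_mul]
      simp_rw [map_smul, inner_smul_left]
      exact tsum_mul_left
    rw [hψraw]
    simp only [this, map_smulₛₗ, RingHom.id_apply, starRingEnd_self_apply]
  have hψnorm : ∀ v : h, ‖ψraw v‖ ≤ C * ‖a‖ * ‖v‖ := by
    intro v
    rw [hψraw]
    rw [LinearIsometryEquiv.norm_map]
    exact hGnorm v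
  let ψa : h →L[ℂ] h := LinearMap.mkContinuous
    { toFun := ψraw, map_add' := hψadd, map_smul' := hψsmul } (C * ‖a‖)
    (fun v => by simpa [mul_assoc] using hψnorm v)
  have hψa : ∀ v, ψa v = ψraw v := fun v => rfl
  refine ⟨ψa, fun u v => by rw [hψa]; exact hψinner' u v,
    LinearMap.mkContinuous_norm_le _ (by positivity) _, ?_⟩
  rintro ⟨hsa, hpos⟩
  have hsym := (ContinuousLinearMap.isSelfAdjoint_iff_isSymmetric).mp hsa
  constructor
  · rw [ContinuousLinearMap.isSelfAdjoint_iff_isSymmetric]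
    intro x y
    show (inner ℂ (ψraw x) y : ℂ) = inner ℂ x (ψraw y)
    rw [hψinner, ← (hψinner' x y).tsum_eq]
    exact tsum_congr fun j => hsym (H j x) (H j y)
  · intro u
    have h1 := hψinner' u u
    have h2 := h1.mapL Complex.reCLM
    have h3 : (0:ℝ) ≤ Complex.reCLM (inner ℂ u (ψraw u) : ℂ) := by
      rw [← h2.tsum_eq]
      exact tsum_nonneg fun j => hpos (H j u)
    exact h3
end

section
/- Let A be a complex star algebra (for instance a C*-algebra), k a positive integer, and H_1, …, H_k ∈ A with H_j* = −H_j for every j. Define 𝓛(a) = ∑_{j=1}^k [H_j,[H_j,a]] and ∂(x,y) = 𝓛(x*·y) − 𝓛(x*)·y − x*·𝓛(y). If z ∈ A commutes with every H_j (i.e. H_j·z = z·H_j for all j), then for every a ∈ A: ∂(a·z, a·z) = z*·∂(a,a)·z. -/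
/-- In a complex star algebra, for `H_j* = -H_j`, with
`𝓛(a) = ∑_j [H_j,[H_j,a]]` and `∂(x,y) = 𝓛(x* y) - 𝓛(x*) y - x* 𝓛(y)`, if `z` commutes
with every `H_j` then `∂(a z, a z) = z* ∂(a,a) z` for every `a`. -/
theorem stmt_9 {A : Type*} [Ring A] [Algebra ℂ A] [StarRing A]
    (k : ℕ) (hk : 0 < k) (H : Fin k → A)
    (hH : ∀ j, star (H j) = -(H j))
    (𝓛 : A → A)
    (h𝓛 : ∀ a, 𝓛 a = ∑ j, (H j * (H j * a - a * H j) - (H j * a - a * H j) * H j))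
    (D : A → A → A)
    (hD : ∀ x y, D x y = 𝓛 (star x * y) - 𝓛 (star x) * y - star x * 𝓛 y)
    (z : A) (hz : ∀ j, H j * z = z * H j) :
    ∀ a : A, D (a * z) (a * z) = star z * D a a * z := by
  intro a
  have hw : ∀ j, H j * star z = star z * H j := by
    intro j
    have := congrArg star (hz j)
    simp only [star_mul, hH, neg_mul, mul_neg, neg_inj] at this
    exact this.symm
  have hw' : ∀ j x, H j * (star z * x) = star z * (H j * x) := by
    intro j x; rw [← mul_assoc, hw, mul_assoc]
  have hz' : ∀ j x, z * (H j * x) = H j * (z * x) := by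
    intro j x; rw [← mul_assoc, ← hz, mul_assoc]
  have hz'' : ∀ j, z * H j = H j * z := fun j => (hz j).symm
  simp only [hD, h𝓛, star_mul, Finset.sum_mul, Finset.mul_sum, ← Finset.sum_sub_distrib]
  refine Finset.sum_congr rfl fun j _ => ?_
  simp only [mul_sub, sub_mul, mul_assoc, hw, hw', hz'', hz']
end

section
/- Let h be a complex Hilbert space and T, S bounded operators on h such that S is a compact operator and T*∘T ≤ S (i.e. the operator S − T*∘T is positive). Then T is a compact operator. -/
/-- If `S` is a compact operator on a complex Hilbert space and
`T* T ≤ S` (i.e. `S - T* T` is positive), then `T` is a compact operator. -/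
theorem stmt_11 {h : Type*} [NormedAddCommGroup h] [InnerProductSpace ℂ h] [CompleteSpace h]
    (T S : h →L[ℂ] h)
    (hS : IsCompactOperator S)
    (hpos : IsSelfAdjoint (S - ContinuousLinearMap.adjoint T ∘L T) ∧
      ∀ u : h, 0 ≤ (inner ℂ u ((S - ContinuousLinearMap.adjoint T ∘L T) u) : ℂ).re) :
    IsCompactOperator T := by
  obtain ⟨-, hpos⟩ := hpos
  -- Key inequality : ‖T w‖ ^ 2 ≤ ‖w‖ * ‖S w‖
  have key : ∀ w : h, ‖T w‖ ^ 2 ≤ ‖w‖ * ‖S w‖ := by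
    intro w
    have h1 := hpos w
    have h2 : (inner ℂ w ((ContinuousLinearMap.adjoint T ∘L T) w) : ℂ).re = ‖T w‖ ^ 2 := by
      rw [ContinuousLinearMap.comp_apply, ContinuousLinearMap.adjoint_inner_right]
      exact_mod_cast congrArg Complex.re (inner_self_eq_norm_sq_to_K (𝕜 := ℂ) (T w))
    rw [ContinuousLinearMap.sub_apply, inner_sub_right, Complex.sub_re, h2] at h1
    have h3 : (inner ℂ w (S w) : ℂ).re ≤ ‖w‖ * ‖S w‖ := by
      calc (inner ℂ w (S w) : ℂ).re ≤ ‖(inner ℂ w (S w) : ℂ)‖ := Complex.re_le_norm _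
        _ ≤ ‖w‖ * ‖S w‖ := norm_inner_le_norm _ _
    linarith
  suffices TotallyBounded (T '' Metric.closedBall 0 1) by
    change IsCompactOperator (T : h →ₗ[ℂ] h)
    rw [isCompactOperator_iff_isCompact_closure_image_closedBall (T : h →ₗ[ℂ] h) zero_lt_one]
    exact TotallyBounded.isCompact_of_isClosed this.closure isClosed_closure
  -- S image of closed ball is totally bounded
  have tbS : TotallyBounded (S '' Metric.closedBall 0 1) :=
    (hS.isCompact_closure_image_closedBall 1).totallyBounded.subset subset_closure
  rw [Metric.totallyBounded_iff]
  intro ε hε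
  have hδ : (0:ℝ) < ε ^ 2 / 2 := by positivity
  obtain ⟨t, hts, htf, htc⟩ := totallyBounded_iff_subset.mp tbS
    {p : h × h | dist p.1 p.2 < ε ^ 2 / 2} (Metric.dist_mem_uniformity hδ)
  choose! g hgB hgS using fun y (hy : y ∈ t) => hts hy
  refine ⟨(fun y => T (g y)) '' t, htf.image _, ?_⟩
  rintro x ⟨u, hu, rfl⟩
  have hSu : S u ∈ ⋃ y ∈ t, {x | (x, y) ∈ {p : h × h | dist p.1 p.2 < ε ^ 2 / 2}} :=
    htc ⟨u, hu, rfl⟩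
  simp only [Set.mem_iUnion, Set.mem_setOf_eq] at hSu
  obtain ⟨y, hy, hdy⟩ := hSu
  rw [Set.mem_iUnion₂]
  refine ⟨T (g y), Set.mem_image_of_mem _ hy, ?_⟩
  have hgB' := hgB y hy
  have hgS' := hgS y hy
  have hnorm : ‖u - g y‖ ≤ 2 := by
    have h1 : ‖u‖ ≤ 1 := by simpa using hu
    have h2 : ‖g y‖ ≤ 1 := by simpa using hgB'
    calc ‖u - g y‖ ≤ ‖u‖ + ‖g y‖ := norm_sub_le _ _
      _ ≤ 2 := by linarith
  have hS2 : ‖S (u - g y)‖ < ε ^ 2 / 2 := by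
    rw [map_sub, hgS']
    rw [← dist_eq_norm]; exact hdy
  have hT2 : ‖T u - T (g y)‖ ^ 2 < ε ^ 2 := by
    have := key (u - g y)
    rw [map_sub] at this
    nlinarith [norm_nonneg (S (u - g y)), norm_nonneg (T u - T (g y))]
  have : ‖T u - T (g y)‖ < ε :=
    lt_of_pow_lt_pow_left₀ 2 hε.le hT2
  simpa [Metric.mem_ball, dist_eq_norm] using this
end

section
/- Let n be a positive integer and δ : M_n(ℂ) → M_n(ℂ) a ℂ-linear map that is a derivation, i.e. δ(x·y) = δ(x)·y + x·δ(y) for all x, y ∈ M_n(ℂ). Then δ is inner: there exists H ∈ M_n(ℂ) such that δ(x) = H·x − x·H for all x ∈ M_n(ℂ); in particular trace(δ(x)) = 0 for every x. -/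
open Matrix

/-- Every ℂ-linear derivation `δ` of `M_n(ℂ)` is inner, i.e. of the form
`δ(x) = H x - x H` for some `H`; in particular `trace (δ x) = 0` for every `x`. -/
theorem stmt_13 (n : ℕ) (hn : 0 < n)
    (δ : Matrix (Fin n) (Fin n) ℂ →ₗ[ℂ] Matrix (Fin n) (Fin n) ℂ)
    (hδ : ∀ x y : Matrix (Fin n) (Fin n) ℂ, δ (x * y) = δ x * y + x * δ y) :
    (∃ H : Matrix (Fin n) (Fin n) ℂ, ∀ x, δ x = H * x - x * H) ∧
    ∀ x : Matrix (Fin n) (Fin n) ℂ, (δ x).trace = 0 := by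
  classical
  set i0 : Fin n := ⟨0, hn⟩ with hi0
  set E : Fin n → Fin n → Matrix (Fin n) (Fin n) ℂ :=
    fun i j => single i j 1 with hE
  have hmul : ∀ a b c d : Fin n, E a b * E c d = if b = c then E a d else 0 := by
    intro a b c d
    by_cases h : b = c
    · subst h; simp [hE, Matrix.single_mul_single_same]
    · simp [hE, h]
  set H : Matrix (Fin n) (Fin n) ℂ := ∑ k, δ (E k i0) * E i0 k with hH
  have hone : ∑ k, E k i0 * E i0 k = (1 : Matrix (Fin n) (Fin n) ℂ) := by
    have : ∀ k : Fin n, E k i0 * E i0 k = E k k := by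
      intro k; rw [hmul]; simp
    rw [Finset.sum_congr rfl fun k _ => this k]
    ext a b
    by_cases hab : a = b
    · subst hab
      rw [Matrix.sum_apply]
      rw [Finset.sum_eq_single a]
      · simp [hE, Matrix.single]
      · intro k _ hk; simp [hE, Matrix.single, hk]
      · simp
    · rw [Matrix.sum_apply]
      rw [Finset.sum_eq_zero, Matrix.one_apply_ne hab]
      intro k _
      simp only [hE, Matrix.single, Matrix.of_apply]
      rw [if_neg]
      rintro ⟨h1, h2⟩
      exact hab (h1.symm.trans h2)
  have key : ∀ i j, δ (E i j) = H * E i j - E i j * H := by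
    intro i j
    have h1 : H * E i j = δ (E i i0) * E i0 j := by
      rw [hH, Finset.sum_mul, Finset.sum_eq_single i]
      · rw [mul_assoc, hmul]; simp
      · intro k _ hk
        rw [mul_assoc, hmul]
        simp [hk]
      · simp
    have h2 : ∀ k : Fin n,
        E i j * δ (E k i0) = δ (if j = k then E i i0 else 0) - δ (E i j) * E k i0 := by
      intro k
      have h := hδ (E i j) (E k i0)
      rw [hmul] at h
      rw [eq_sub_iff_add_eq, add_comm, ← h]
    have h3 : E i j * H = δ (E i i0) * E i0 j - δ (E i j) := by
      rw [hH, Finset.mul_sum]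
      calc ∑ k, E i j * (δ (E k i0) * E i0 k)
          = ∑ k, ((δ (if j = k then E i i0 else 0) - δ (E i j) * E k i0) * E i0 k) := by
            refine Finset.sum_congr rfl fun k _ => ?_
            rw [← mul_assoc, h2 k]
        _ = (∑ k, δ (if j = k then E i i0 else 0) * E i0 k)
              - ∑ k, δ (E i j) * (E k i0 * E i0 k) := by
            rw [← Finset.sum_sub_distrib]
            refine Finset.sum_congr rfl fun k _ => by rw [sub_mul, mul_assoc]
        _ = δ (E i i0) * E i0 j - δ (E i j) := by
            rw [← Finset.mul_sum, hone, mul_one]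
            congr 1
            rw [Finset.sum_eq_single j]
            · simp
            · intro k _ hk
              simp [(Ne.symm hk : ¬ j = k)]
            · simp
    rw [h1, h3]
    abel
  have main : ∀ x : Matrix (Fin n) (Fin n) ℂ, δ x = H * x - x * H := by
    intro x
    have hx : x = ∑ i, ∑ j, x i j • E i j := by
      conv_lhs => rw [matrix_eq_sum_single x]
      refine Finset.sum_congr rfl fun i _ => Finset.sum_congr rfl fun j _ => ?_
      ext a b
      simp only [hE, Matrix.smul_apply, Matrix.single, Matrix.of_apply, smul_eq_mul]
      by_cases h : i = a ∧ j = b <;> simp [h]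
    conv_lhs => rw [hx]
    conv_rhs => rw [hx]
    simp only [map_sum, LinearMap.map_smul, key, smul_sub, Finset.mul_sum, Finset.sum_mul,
      mul_smul_comm, smul_mul_assoc, Finset.sum_sub_distrib]
  refine ⟨⟨H, main⟩, fun x => ?_⟩
  rw [main x, trace_sub, trace_mul_comm, sub_self]
end

section
/- Let n be a positive integer and 𝓛 : M_n(ℂ) → M_n(ℂ) a ℂ-linear map satisfying: (i) 𝓛(xᴴ) = 𝓛(x)ᴴ for all x; (ii) 𝓛(1) = 0, where 1 is the identity matrix; (iii) 𝓛 is conditionally completely positive, i.e. for every m, all x_1, …, x_m ∈ M_n(ℂ) and all u_1, …, u_m ∈ ℂⁿ with ∑_{i=1}^m x_i u_i = 0, one has ∑_{i,j=1}^m ⟪u_i, 𝓛(x_iᴴ·x_j) u_j⟫ ≥ 0 (as a real number); (iv) 𝓛 is symmetric with respect to the trace: trace(𝓛(a)·b) = trace(a·𝓛(b)) for all a, b ∈ M_n(ℂ). Then there exist a natural number k and matrices β_1, …, β_k ∈ M_n(ℂ) with β_jᴴ = −β_j and trace(β_j) = 0 for each j, such that 𝓛(a) = (1/2)·∑_{j=1}^k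 [β_j,[β_j,a]] for all a ∈ M_n(ℂ). -/
open Matrix

namespace Stmt15
variable {n : ℕ}

/-- abbreviation for matrix units -/
noncomputable abbrev Eb (p q : Fin n) : Matrix (Fin n) (Fin n) ℂ := single p q 1

lemma Eb_apply (p q a b : Fin n) : Eb p q a b = if p = a ∧ q = b then 1 else 0 := by
  simp [single]

lemma Eb_conjTranspose (p q : Fin n) : (Eb p q)ᴴ = Eb q p := by
  ext a b
  simp [Eb_apply, conjTranspose_apply, single]
  aesop

lemma Eb_mul_Eb (p q r s : Fin n) :
    Eb p q * Eb r s = if q = r then Eb p s else 0 := by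
  by_cases h : q = r
  · subst h; simp [single_mul_single_same]
  · simp [h, single_mul_single_of_ne, Ne.symm h]

lemma entry_mul_mul (X Y Z : Matrix (Fin n) (Fin n) ℂ) (u v : Fin n) :
    (X * Y * Z) u v = ∑ a, ∑ b, X u a * Y a b * Z b v := by
  simp [mul_apply, Finset.sum_mul, Finset.mul_sum]
  rw [Finset.sum_comm]

lemma mul_Eb_mul (X Y : Matrix (Fin n) (Fin n) ℂ) (r s u v : Fin n) :
    (X * Eb r s * Y) u v = X u r * Y s v := by
  rw [entry_mul_mul]
  rw [Finset.sum_eq_single r]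
  · rw [Finset.sum_eq_single s]
    · simp [Eb_apply]
    · intro b _ hb; simp [Eb_apply, hb, Ne.symm hb]
    · intro h; exact absurd (Finset.mem_univ s) h
  · intro a _ ha; simp [Eb_apply, Ne.symm ha]
  · intro h; exact absurd (Finset.mem_univ r) h

lemma trace_Eb_mul (X : Matrix (Fin n) (Fin n) ℂ) (p q : Fin n) :
    (Eb p q * X).trace = X q p := by
  classical
  rw [trace]
  rw [Finset.sum_eq_single p]
  · simp [diag, mul_apply, Eb_apply]
  · intro b _ hb
    simp [diag, mul_apply, Eb_apply, Ne.symm hb]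
  · intro h; exact absurd (Finset.mem_univ p) h

lemma trace_mul_Eb (X : Matrix (Fin n) (Fin n) ℂ) (p q : Fin n) :
    (X * Eb p q).trace = X q p := by
  rw [trace_mul_comm, trace_Eb_mul]

lemma eq_zero_of_trace_mul (X : Matrix (Fin n) (Fin n) ℂ)
    (h : ∀ a, (a * X).trace = 0) : X = 0 := by
  ext p q
  have := h (Eb q p)
  rwa [trace_mul_comm, trace_mul_Eb] at this






lemma trace_Eb_mul_Eb (a b r s : Fin n) :
    (Eb a b * Eb r s).trace = if r = b ∧ s = a then 1 else 0 := by
  rw [trace_Eb_mul, Eb_apply]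

lemma sqrt2_inv_mul : ((Real.sqrt 2 : ℂ))⁻¹ * ((Real.sqrt 2 : ℂ))⁻¹ = 1/2 := by
  rw [← mul_inv, ← Complex.ofReal_mul, Real.mul_self_sqrt (by norm_num)]
  norm_num

lemma trace_Eb (p q : Fin n) : (Eb p q).trace = if p = q then 1 else 0 := by
  rcases eq_or_ne p q with rfl | h
  · simp [trace, diag, Eb_apply]
  · rw [trace, if_neg h]
    apply Finset.sum_eq_zero
    intro i _
    simp [diag, Eb_apply]
    rintro rfl rfl; exact absurd rfl h

lemma exists_diag_basis (n : ℕ) (hn : 0 < n) :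
    ∃ b : OrthonormalBasis (Fin n) ℝ (EuclideanSpace ℝ (Fin n)),
      ∀ i, b ⟨0, hn⟩ i = (Real.sqrt n)⁻¹ := by
  set z : Fin n := ⟨0, hn⟩
  set v : Fin n → EuclideanSpace ℝ (Fin n) := fun _ => WithLp.toLp 2 (fun _ => (Real.sqrt n)⁻¹) with hv
  have hsq : (Real.sqrt n)⁻¹ * (Real.sqrt n)⁻¹ = (n : ℝ)⁻¹ := by
    rw [← mul_inv]
    rw [Real.mul_self_sqrt (by positivity)]
  have horth : Orthonormal ℝ (({z} : Set (Fin n)).restrict v) := by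
    constructor
    · intro i
      have : ‖(({z} : Set (Fin n)).restrict v) i‖ ^ 2 = 1 := by
        rw [← real_inner_self_eq_norm_sq]
        simp only [Set.restrict_apply, hv]
        rw [PiLp.inner_apply]
        simp only [RCLike.inner_apply, conj_trivial]
        change ∑ _i : Fin n, (Real.sqrt n)⁻¹ * (Real.sqrt n)⁻¹ = 1
        rw [Finset.sum_const, Finset.card_univ, Fintype.card_fin]
        rw [hsq]
        field_simp
        rw [nsmul_eq_mul, mul_one_div, div_self (Nat.cast_ne_zero.mpr hn.ne')]
      nlinarith [norm_nonneg ((({z} : Set (Fin n)).restrict v) i), this]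
    · intro i j hij
      exfalso
      exact hij (Subtype.ext (by
        have hi := i.2; have hj := j.2
        simp only [Set.mem_singleton_iff] at hi hj
        rw [hi, hj]))
  obtain ⟨b, hb⟩ := horth.exists_orthonormalBasis_extension_of_card_eq (by simp)
  refine ⟨b, fun i => ?_⟩
  have := hb z (Set.mem_singleton z)
  rw [this]

set_option maxHeartbeats 2000000 in
lemma exists_good_basis (n : ℕ) (hn : 0 < n) :
    ∃ F : Fin n × Fin n → Matrix (Fin n) (Fin n) ℂ,
      (∀ α, (F α)ᴴ = F α) ∧
      (∀ α β, (F α * F β).trace = if α = β then 1 else 0) ∧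
      (∀ α, α ≠ (⟨0,hn⟩, ⟨0,hn⟩) → (F α).trace = 0) ∧
      (∃ t : ℂ, F (⟨0,hn⟩, ⟨0,hn⟩) = t • 1) := by
  obtain ⟨b, hb⟩ := exists_diag_basis n hn
  set z : Fin n := ⟨0, hn⟩ with hz
  set c : ℂ := ((Real.sqrt 2 : ℝ) : ℂ)⁻¹ with hc
  have hcc : c * c = 1/2 := by
    rw [hc, ← mul_inv, ← Complex.ofReal_mul, Real.mul_self_sqrt (by norm_num)]
    norm_num
  have hstarc : (starRingEnd ℂ) c = c := by
    rw [hc, ← Complex.ofReal_inv, Complex.conj_ofReal]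
  set F : Fin n × Fin n → Matrix (Fin n) (Fin n) ℂ := fun α =>
    if α.1 = α.2 then diagonal (fun i => ((b α.1 i : ℝ) : ℂ))
    else if α.1 < α.2 then c • (Eb α.1 α.2 + Eb α.2 α.1)
    else (c * Complex.I) • (Eb α.1 α.2 - Eb α.2 α.1) with hF
  have Fd : ∀ p, F (p,p) = diagonal (fun i => ((b p i : ℝ) : ℂ)) := by
    intro p; simp [hF]
  have Fs : ∀ p q : Fin n, p < q → F (p,q) = c • (Eb p q + Eb q p) := by
    intro p q h; simp only [hF]; rw [if_neg (by exact ne_of_lt h), if_pos h]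
  have Fa : ∀ p q : Fin n, q < p → F (p,q) = (c * Complex.I) • (Eb p q - Eb q p) := by
    intro p q h; simp only [hF]
    rw [if_neg (by exact (ne_of_lt h).symm), if_neg (by omega)]
  have bort : ∀ p q : Fin n, (∑ i, b p i * b q i) = if p = q then (1:ℝ) else 0 := by
    intro p q
    have := orthonormal_iff_ite.mp b.orthonormal p q
    rw [PiLp.inner_apply] at this
    simpa only [RCLike.inner_apply, conj_trivial, mul_comm] using this
  -- Hermitian
  have Ebct : ∀ p q : Fin n, (Eb p q)ᴴ = Eb q p := by
    intro p q; ext a bb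
    simp only [conjTranspose_apply, Eb_apply]
    split_ifs <;> simp_all <;> omega
  have herm : ∀ α, (F α)ᴴ = F α := by
    rintro ⟨p, q⟩
    rcases lt_trichotomy p q with h | h | h
    · rw [Fs p q h, conjTranspose_smul, conjTranspose_add, Ebct, Ebct]
      rw [show star c = c from hstarc, add_comm]
    · subst h
      rw [Fd]
      ext i j
      rcases eq_or_ne i j with rfl | hij
      · simp [conjTranspose_apply, diagonal_apply_eq, Complex.conj_ofReal]
      · simp [conjTranspose_apply, diagonal_apply_ne _ hij, diagonal_apply_ne _ (Ne.symm hij)]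
    · rw [Fa p q h, conjTranspose_smul, conjTranspose_sub, Ebct, Ebct]
      have : star (c * Complex.I) = -(c * Complex.I) := by
        rw [star_mul', show star c = c from hstarc, Complex.star_def, Complex.conj_I]
        ring
      rw [this, neg_smul, ← smul_neg, neg_sub]
  -- orthonormality
  have orth : ∀ α β, (F α * F β).trace = if α = β then 1 else 0 := by
    rintro ⟨p, q⟩ ⟨r, s⟩
    simp only [Prod.mk.injEq]
    rcases lt_trichotomy p q with hpq | hpq | hpq <;>
      rcases lt_trichotomy r s with hrs | hrs | hrs
    · -- sym sym
      rw [Fs p q hpq, Fs r s hrs, smul_mul_smul_comm, trace_smul, hcc]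
      simp only [add_mul, mul_add, trace_add, trace_Eb_mul_Eb, smul_eq_mul]
      split_ifs <;> first | omega | norm_num
    · -- sym diag
      subst hrs
      rw [Fs p q hpq, Fd, smul_mul_assoc, trace_smul, add_mul, trace_add,
        trace_Eb_mul, trace_Eb_mul]
      rw [diagonal_apply_ne _ (by omega), diagonal_apply_ne _ (by omega)]
      simp only [smul_eq_mul]
      split_ifs <;> first | omega | norm_num
    · -- sym antisym
      rw [Fs p q hpq, Fa r s hrs, smul_mul_smul_comm, trace_smul]
      simp only [add_mul, mul_sub, trace_sub, trace_add, trace_Eb_mul_Eb, smul_eq_mul]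
      split_ifs <;> first | omega | ring | norm_num
    · -- diag sym
      subst hpq
      rw [Fd, Fs r s hrs, mul_smul_comm, trace_smul, mul_add, trace_add,
        trace_mul_comm _ (Eb r s), trace_mul_comm _ (Eb s r), trace_Eb_mul, trace_Eb_mul]
      rw [diagonal_apply_ne _ (by omega), diagonal_apply_ne _ (by omega)]
      simp only [smul_eq_mul]
      split_ifs <;> first | omega | norm_num
    · -- diag diag
      subst hpq; subst hrs
      rw [Fd, Fd, diagonal_mul_diagonal, trace_diagonal]
      have : ∀ i, ((b p i : ℝ) : ℂ) * ((b r i : ℝ) : ℂ) = (((b p i * b r i : ℝ)) : ℂ) := by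
        intro i; push_cast; ring
      rw [Finset.sum_congr rfl (fun i _ => this i), ← Complex.ofReal_sum, bort]
      split_ifs <;> simp_all
    · -- diag antisym
      subst hpq
      rw [Fd, Fa r s hrs, mul_smul_comm, trace_smul, mul_sub, trace_sub,
        trace_mul_comm _ (Eb r s), trace_mul_comm _ (Eb s r), trace_Eb_mul, trace_Eb_mul]
      rw [diagonal_apply_ne _ (by omega), diagonal_apply_ne _ (by omega)]
      simp only [smul_eq_mul]
      split_ifs <;> first | omega | norm_num
    · -- antisym sym
      rw [Fa p q hpq, Fs r s hrs, smul_mul_smul_comm, trace_smul]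
      simp only [sub_mul, mul_add, trace_add, trace_sub, trace_Eb_mul_Eb, smul_eq_mul]
      split_ifs <;> first | omega | ring | norm_num
    · -- antisym diag
      subst hrs
      rw [Fa p q hpq, Fd, smul_mul_assoc, trace_smul, sub_mul, trace_sub,
        trace_Eb_mul, trace_Eb_mul]
      rw [diagonal_apply_ne _ (by omega), diagonal_apply_ne _ (by omega)]
      simp only [smul_eq_mul]
      split_ifs <;> first | omega | norm_num
    · -- antisym antisym
      rw [Fa p q hpq, Fa r s hrs, smul_mul_smul_comm, trace_smul]
      have hci : (c * Complex.I) * (c * Complex.I) = -(1/2 : ℂ) := by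
        have : (c * Complex.I) * (c * Complex.I) = (c * c) * (Complex.I * Complex.I) := by ring
        rw [this, hcc, Complex.I_mul_I]; ring
      rw [hci]
      simp only [sub_mul, mul_sub, trace_sub, trace_Eb_mul_Eb, smul_eq_mul]
      split_ifs <;> first | omega | norm_num
  -- traces
  have htr : ∀ α, α ≠ (z, z) → (F α).trace = 0 := by
    rintro ⟨p, q⟩ hne
    rcases lt_trichotomy p q with h | h | h
    · rw [Fs p q h, trace_smul, trace_add, trace_Eb, trace_Eb]
      rw [if_neg (by omega), if_neg (by omega)]
      simp
    · subst h
      have hpz : p ≠ z := fun h => hne (by rw [h])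
      rw [Fd, trace_diagonal]
      have h1 : ∑ i, ((b p i : ℝ) : ℂ) = ((∑ i, b p i : ℝ) : ℂ) := by push_cast; rfl
      rw [h1]
      have hsn : Real.sqrt n ≠ 0 := by
        simp [Real.sqrt_eq_zero']
        positivity
      have h2 : (∑ i, b p i) = Real.sqrt n * ∑ i, (Real.sqrt n)⁻¹ * b p i := by
        rw [Finset.mul_sum]
        refine Finset.sum_congr rfl fun i _ => ?_
        rw [← mul_assoc, mul_inv_cancel₀ hsn, one_mul]
      have h3 : (∑ i, (Real.sqrt n)⁻¹ * b p i) = 0 := by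
        have := bort z p
        rw [if_neg (Ne.symm hpz)] at this
        rw [← this]
        exact Finset.sum_congr rfl fun i _ => by rw [hb i]
      rw [h2, h3, mul_zero]
      norm_num
    · rw [Fa p q h, trace_smul, trace_sub, trace_Eb, trace_Eb]
      rw [if_neg (by omega), if_neg (by omega)]
      simp
  refine ⟨F, herm, orth, htr, ⟨((Real.sqrt n)⁻¹ : ℝ), ?_⟩⟩
  rw [Fd]
  ext i j
  rcases eq_or_ne i j with rfl | hij
  · simp [diagonal_apply_eq, hb, one_apply_eq]
  · simp [diagonal_apply_ne _ hij, hij, one_apply_ne hij]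






lemma trace_eq_sum_mul (A B : Matrix (Fin n) (Fin n) ℂ) :
    (A * B).trace = ∑ i, ∑ j, A i j * B j i := by
  rw [trace]
  exact Finset.sum_congr rfl fun i _ => by rw [diag, mul_apply]

section Fbasis
variable (F : Fin n × Fin n → Matrix (Fin n) (Fin n) ℂ)
  (h1 : ∀ α, (F α)ᴴ = F α)
  (h2 : ∀ α β, (F α * F β).trace = if α = β then 1 else 0)

include h1 h2 in
lemma completeness :
    ∀ a b c d : Fin n, (∑ α, F α a b * F α c d) = if a = d ∧ b = c then 1 else 0 := by
  classical
  set U : Matrix (Fin n × Fin n) (Fin n × Fin n) ℂ := Matrix.of (fun α p => F α p.1 p.2) with hU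
  have hFsym : ∀ (β : Fin n × Fin n) (i j : Fin n),
      (starRingEnd ℂ) (F β i j) = F β j i := by
    intro β i j
    have := congrFun (congrFun (h1 β) j) i
    rw [conjTranspose_apply] at this
    exact this
  have hUU : U * Uᴴ = 1 := by
    ext α β
    rw [mul_apply]
    have step : ∀ p : Fin n × Fin n, U α p * (Uᴴ) p β = F α p.1 p.2 * F β p.2 p.1 := by
      intro p
      rw [conjTranspose_apply]
      show F α p.1 p.2 * star (F β p.1 p.2) = _
      rw [show star (F β p.1 p.2) = (starRingEnd ℂ) (F β p.1 p.2) from rfl, hFsym]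
    rw [Finset.sum_congr rfl fun p _ => step p]
    rw [Fintype.sum_prod_type]
    dsimp only
    rw [← trace_eq_sum_mul, h2, one_apply]
  have hcomm : Uᴴ * U = 1 := mul_eq_one_comm.mp hUU
  intro a b c d
  have := congrFun (congrFun hcomm (b, a)) (c, d)
  rw [mul_apply, one_apply] at this
  have step2 : ∀ α, (Uᴴ) (b,a) α * U α (c,d) = F α a b * F α c d := by
    intro α
    rw [conjTranspose_apply]
    show star (F α b a) * F α c d = _
    rw [show star (F α b a) = (starRingEnd ℂ) (F α b a) from rfl, hFsym]
  rw [Finset.sum_congr rfl fun α _ => step2 α] at this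
  rw [this]
  by_cases hh : a = d ∧ b = c
  · rw [if_pos (by simp [Prod.ext_iff, hh.1, hh.2]), if_pos hh]
  · rw [if_neg (by simp [Prod.ext_iff]; rintro rfl rfl; exact absurd ⟨rfl, rfl⟩ hh), if_neg hh]

include h1 h2 in
lemma collapse_K1 (M : Matrix (Fin n) (Fin n) ℂ) (p q u r : Fin n) :
    ∑ α, (F α * M) p q * F α u r = if p = r then M u q else 0 := by
  have expand : ∀ α : Fin n × Fin n, (F α * M) p q * F α u r
      = ∑ a, F α p a * F α u r * M a q := by
    intro α
    rw [mul_apply, Finset.sum_mul]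
    exact Finset.sum_congr rfl fun a _ => by ring
  rw [Finset.sum_congr rfl fun α _ => expand α, Finset.sum_comm]
  have inner : ∀ a, ∑ α, F α p a * F α u r * M a q
      = (if p = r ∧ a = u then 1 else 0) * M a q := by
    intro a
    rw [← Finset.sum_mul, completeness F h1 h2]
  rw [Finset.sum_congr rfl fun a _ => inner a]
  by_cases hpr : p = r
  · rw [Finset.sum_eq_single u]
    · simp [hpr]
    · intro a _ ha; simp [ha]
    · intro h; exact absurd (Finset.mem_univ u) h
  · rw [if_neg hpr]
    apply Finset.sum_eq_zero
    intro a _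
    simp [hpr]

include h1 h2 in
lemma collapse_K2 (M : Matrix (Fin n) (Fin n) ℂ) (p q s v : Fin n) :
    ∑ β, (M * F β) p q * F β s v = if q = s then M p v else 0 := by
  have expand : ∀ β : Fin n × Fin n, (M * F β) p q * F β s v
      = ∑ b, F β b q * F β s v * M p b := by
    intro β
    rw [mul_apply, Finset.sum_mul]
    exact Finset.sum_congr rfl fun b _ => by ring
  rw [Finset.sum_congr rfl fun β _ => expand β, Finset.sum_comm]
  have inner : ∀ b, ∑ β, F β b q * F β s v * M p b
      = (if b = v ∧ q = s then 1 else 0) * M p b := by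
    intro b
    rw [← Finset.sum_mul, completeness F h1 h2]
  rw [Finset.sum_congr rfl fun b _ => inner b]
  by_cases hqs : q = s
  · rw [Finset.sum_eq_single v]
    · simp [hqs]
    · intro b _ hb; simp [hb]
    · intro h; exact absurd (Finset.mem_univ v) h
  · rw [if_neg hqs]
    apply Finset.sum_eq_zero
    intro b _
    simp [hqs]

include h1 h2 in
lemma collapse (Z : Fin n → Fin n → Matrix (Fin n) (Fin n) ℂ) (r s u v : Fin n) :
    ∑ α, ∑ β, (∑ p, ∑ q, (F α * Z p q * F β) p q) * (F α u r * F β s v)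
      = Z r s u v := by
  have main : ∀ α : Fin n × Fin n,
      ∑ β, (∑ p, ∑ q, (F α * Z p q * F β) p q) * (F α u r * F β s v)
      = (∑ p, (F α * Z p s) p v) * F α u r := by
    intro α
    have e1 : ∀ β : Fin n × Fin n,
        (∑ p, ∑ q, (F α * Z p q * F β) p q) * (F α u r * F β s v)
        = ∑ p, ∑ q, (F α * Z p q * F β) p q * F β s v * F α u r := by
      intro β
      rw [Finset.sum_mul]
      refine Finset.sum_congr rfl fun p _ => ?_
      rw [Finset.sum_mul]
      refine Finset.sum_congr rfl fun q _ => ?_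
      ring
    rw [Finset.sum_congr rfl fun β _ => e1 β]
    rw [Finset.sum_comm]
    have e2 : ∀ p, ∑ β, ∑ q, (F α * Z p q * F β) p q * F β s v * F α u r
        = (F α * Z p s) p v * F α u r := by
      intro p
      rw [Finset.sum_comm]
      have e3 : ∀ q, ∑ β, (F α * Z p q * F β) p q * F β s v * F α u r
          = (if q = s then (F α * Z p q) p v else 0) * F α u r := by
        intro q
        rw [← Finset.sum_mul, collapse_K2 F h1 h2]
      rw [Finset.sum_congr rfl fun q _ => e3 q]
      rw [Finset.sum_eq_single s]
      · rw [if_pos rfl]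
      · intro q _ hq; rw [if_neg hq, zero_mul]
      · intro h; exact absurd (Finset.mem_univ s) h
    rw [Finset.sum_congr rfl fun p _ => e2 p, ← Finset.sum_mul]
  rw [Finset.sum_congr rfl fun α _ => main α]
  have e4 : ∀ α : Fin n × Fin n, (∑ p, (F α * Z p s) p v) * F α u r
      = ∑ p, (F α * Z p s) p v * F α u r := fun α => by rw [Finset.sum_mul]
  rw [Finset.sum_congr rfl fun α _ => e4 α, Finset.sum_comm]
  have e5 : ∀ p, ∑ α, (F α * Z p s) p v * F α u r
      = if p = r then Z p s u v else 0 := fun p => collapse_K1 F h1 h2 (Z p s) p v u r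
  rw [Finset.sum_congr rfl fun p _ => e5 p]
  rw [Finset.sum_eq_single r]
  · rw [if_pos rfl]
  · intro p _ hp; rw [if_neg hp]
  · intro h; exact absurd (Finset.mem_univ r) h

include h1 h2 in
lemma rep (L : Matrix (Fin n) (Fin n) ℂ →ₗ[ℂ] Matrix (Fin n) (Fin n) ℂ)
    (a : Matrix (Fin n) (Fin n) ℂ) :
    L a = ∑ α, ∑ β, (∑ p, ∑ q, (F α * L (Eb p q) * F β) p q) • (F α * a * F β) := by
  ext u v
  have lhs : L a u v = ∑ r, ∑ s, a r s * (L (Eb r s)) u v := by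
    conv_lhs => rw [matrix_eq_sum_single a]
    rw [map_sum]
    rw [Matrix.sum_apply]
    refine Finset.sum_congr rfl fun r _ => ?_
    rw [map_sum, Matrix.sum_apply]
    refine Finset.sum_congr rfl fun s _ => ?_
    rw [show single r s (a r s) = a r s • Eb r s by rw [smul_single, smul_eq_mul, mul_one]]
    rw [L.map_smul, Matrix.smul_apply, smul_eq_mul]
  rw [lhs]
  rw [Matrix.sum_apply]
  have rhs1 : ∀ α : Fin n × Fin n,
      (∑ β, (∑ p, ∑ q, (F α * L (Eb p q) * F β) p q) • (F α * a * F β)) u v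
      = ∑ r, ∑ s, ∑ β : Fin n × Fin n,
          a r s * ((∑ p, ∑ q, (F α * L (Eb p q) * F β) p q) * (F α u r * F β s v)) := by
    intro α
    rw [Matrix.sum_apply]
    have e7 : ∀ β : Fin n × Fin n,
        ((∑ p, ∑ q, (F α * L (Eb p q) * F β) p q) • (F α * a * F β)) u v
        = ∑ r, ∑ s, a r s * ((∑ p, ∑ q, (F α * L (Eb p q) * F β) p q) * (F α u r * F β s v)) := by
      intro β
      rw [Matrix.smul_apply, entry_mul_mul, smul_eq_mul, Finset.mul_sum]
      refine Finset.sum_congr rfl fun r _ => ?_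
      rw [Finset.mul_sum]
      refine Finset.sum_congr rfl fun s _ => ?_
      ring
    rw [Finset.sum_congr rfl fun β _ => e7 β]
    rw [Finset.sum_comm]
    refine Finset.sum_congr rfl fun r _ => ?_
    rw [Finset.sum_comm]
  refine Eq.symm ?_
  calc ∑ α : Fin n × Fin n, (∑ β, (∑ p, ∑ q, (F α * L (Eb p q) * F β) p q) • (F α * a * F β)) u v
      = ∑ α : Fin n × Fin n, ∑ r, ∑ s, ∑ β : Fin n × Fin n,
          a r s * ((∑ p, ∑ q, (F α * L (Eb p q) * F β) p q) * (F α u r * F β s v)) :=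
        Finset.sum_congr rfl fun α _ => rhs1 α
    _ = ∑ r, ∑ α : Fin n × Fin n, ∑ s, ∑ β : Fin n × Fin n,
          a r s * ((∑ p, ∑ q, (F α * L (Eb p q) * F β) p q) * (F α u r * F β s v)) :=
        Finset.sum_comm
    _ = ∑ r, ∑ s, ∑ α : Fin n × Fin n, ∑ β : Fin n × Fin n,
          a r s * ((∑ p, ∑ q, (F α * L (Eb p q) * F β) p q) * (F α u r * F β s v)) :=
        Finset.sum_congr rfl fun r _ => Finset.sum_comm
    _ = ∑ r, ∑ s, a r s * L (Eb r s) u v := by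
        refine Finset.sum_congr rfl fun r _ => Finset.sum_congr rfl fun s _ => ?_
        have e8 : ∑ α : Fin n × Fin n, ∑ β : Fin n × Fin n,
            a r s * ((∑ p, ∑ q, (F α * L (Eb p q) * F β) p q) * (F α u r * F β s v))
            = a r s * ∑ α, ∑ β, ((∑ p, ∑ q, (F α * L (Eb p q) * F β) p q) * (F α u r * F β s v)) := by
          rw [Finset.mul_sum]
          refine Finset.sum_congr rfl fun α _ => ?_
          rw [Finset.mul_sum]
        rw [e8, collapse F h1 h2 (fun p q => L (Eb p q)) r s u v]

include h1 h2 in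
lemma extraction (d : Fin n × Fin n → Fin n × Fin n → ℂ) (γ δ : Fin n × Fin n) :
    ∑ p, ∑ q, ((F γ * (∑ α, ∑ β, d α β • (F α * Eb p q * F β)) * F δ : Matrix (Fin n) (Fin n) ℂ)) p q = d γ δ := by
  have key : ∀ p q : Fin n,
      ((F γ * (∑ α, ∑ β, d α β • (F α * Eb p q * F β)) * F δ : Matrix (Fin n) (Fin n) ℂ)) p q
      = ∑ α, ∑ β, d α β * ((F γ * F α) p p * (F β * F δ) q q) := by
    intro p q
    have e1 : F γ * (∑ α, ∑ β, d α β • (F α * Eb p q * F β)) * F δ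
        = ∑ α, ∑ β, d α β • (F γ * F α * Eb p q * (F β * F δ)) := by
      rw [Finset.mul_sum, Finset.sum_mul]
      refine Finset.sum_congr rfl fun α _ => ?_
      rw [Finset.mul_sum, Finset.sum_mul]
      refine Finset.sum_congr rfl fun β _ => ?_
      rw [mul_smul_comm, smul_mul_assoc]
      congr 1
      noncomm_ring
    rw [e1, Matrix.sum_apply]
    refine Finset.sum_congr rfl fun α _ => ?_
    rw [Matrix.sum_apply]
    refine Finset.sum_congr rfl fun β _ => ?_
    rw [Matrix.smul_apply, smul_eq_mul, mul_Eb_mul]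
  calc ∑ p, ∑ q, ((F γ * (∑ α, ∑ β, d α β • (F α * Eb p q * F β)) * F δ : Matrix (Fin n) (Fin n) ℂ)) p q
      = ∑ p, ∑ q, ∑ α : Fin n × Fin n, ∑ β : Fin n × Fin n,
          d α β * ((F γ * F α) p p * (F β * F δ) q q) :=
        Finset.sum_congr rfl fun p _ => Finset.sum_congr rfl fun q _ => key p q
    _ = ∑ p, ∑ α : Fin n × Fin n, ∑ q, ∑ β : Fin n × Fin n,
          d α β * ((F γ * F α) p p * (F β * F δ) q q) :=
        Finset.sum_congr rfl fun p _ => Finset.sum_comm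
    _ = ∑ α : Fin n × Fin n, ∑ p, ∑ q, ∑ β : Fin n × Fin n,
          d α β * ((F γ * F α) p p * (F β * F δ) q q) := Finset.sum_comm
    _ = ∑ α : Fin n × Fin n, ∑ p, ∑ β : Fin n × Fin n, ∑ q,
          d α β * ((F γ * F α) p p * (F β * F δ) q q) :=
        Finset.sum_congr rfl fun α _ => Finset.sum_congr rfl fun p _ => Finset.sum_comm
    _ = ∑ α : Fin n × Fin n, ∑ β : Fin n × Fin n, ∑ p, ∑ q,
          d α β * ((F γ * F α) p p * (F β * F δ) q q) :=
        Finset.sum_congr rfl fun α _ => Finset.sum_comm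
    _ = ∑ α : Fin n × Fin n, ∑ β : Fin n × Fin n,
          d α β * ((F γ * F α).trace * (F β * F δ).trace) := by
        refine Finset.sum_congr rfl fun α _ => Finset.sum_congr rfl fun β _ => ?_
        have e2 : ∀ p, ∑ q, d α β * ((F γ * F α) p p * (F β * F δ) q q)
            = d α β * (F γ * F α) p p * (F β * F δ).trace := by
          intro p
          rw [trace, Finset.mul_sum]
          exact Finset.sum_congr rfl fun q _ => by rw [diag]; ring
        rw [Finset.sum_congr rfl fun p _ => e2 p]
        have ht : (F γ * F α).trace = ∑ p, (F γ * F α) p p := rfl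
        rw [← Finset.sum_mul, ← Finset.mul_sum, ht]
        ring
    _ = d γ δ := by
        rw [Finset.sum_eq_single γ]
        · rw [Finset.sum_eq_single δ]
          · rw [h2 γ γ, h2 δ δ, if_pos rfl, if_pos rfl]; ring
          · intro β _ hβ; rw [h2 β δ, if_neg hβ, mul_zero, mul_zero]
          · intro h; exact absurd (Finset.mem_univ δ) h
        · intro α _ hα
          rw [Finset.sum_eq_zero]
          intro β _
          rw [h2 γ α, if_neg (fun hh => hα hh.symm), zero_mul, mul_zero]
        · intro h; exact absurd (Finset.mem_univ γ) h

end Fbasis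

section Main
variable (F : Fin n × Fin n → Matrix (Fin n) (Fin n) ℂ)
  (h1 : ∀ α, (F α)ᴴ = F α)
  (h2 : ∀ α β, (F α * F β).trace = if α = β then 1 else 0)
  (LL : Matrix (Fin n) (Fin n) ℂ →ₗ[ℂ] Matrix (Fin n) (Fin n) ℂ)
  (c : Fin n × Fin n → Fin n × Fin n → ℂ)
  (hc : ∀ a, LL a = ∑ α, ∑ β, c α β • (F α * a * F β))

include h1 h2 hc in
lemma c_formula : ∀ γ δ, c γ δ
    = ∑ p, ∑ q, ((F γ * LL (Eb p q) * F δ : Matrix (Fin n) (Fin n) ℂ)) p q := by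
  intro γ δ
  rw [← extraction F h1 h2 c γ δ]
  refine Finset.sum_congr rfl fun p _ => Finset.sum_congr rfl fun q _ => ?_
  rw [← hc (Eb p q)]

include h1 h2 hc in
lemma coeff_unique (d : Fin n × Fin n → Fin n × Fin n → ℂ)
    (hd : ∀ a, LL a = ∑ α, ∑ β, d α β • (F α * a * F β)) : ∀ γ δ, c γ δ = d γ δ := by
  intro γ δ
  rw [c_formula F h1 h2 LL c hc γ δ]
  rw [← extraction F h1 h2 d γ δ]
  refine Finset.sum_congr rfl fun p _ => Finset.sum_congr rfl fun q _ => ?_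
  rw [← hd (Eb p q)]

include h1 h2 hc in
lemma c_herm (hstar : ∀ x, LL xᴴ = (LL x)ᴴ) :
    ∀ α β, c α β = (starRingEnd ℂ) (c β α) := by
  have hrep2 : ∀ a, LL a = ∑ α, ∑ β, (starRingEnd ℂ) (c β α) • (F α * a * F β) := by
    intro a
    have e0 : LL a = (LL aᴴ)ᴴ := by rw [hstar, conjTranspose_conjTranspose]
    rw [e0, hc aᴴ]
    have e1 : (∑ α, ∑ β, c α β • (F α * aᴴ * F β))ᴴ
        = ∑ α, ∑ β, (starRingEnd ℂ) (c α β) • (F β * a * F α) := by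
      rw [conjTranspose_sum]
      refine Finset.sum_congr rfl fun α _ => ?_
      rw [conjTranspose_sum]
      refine Finset.sum_congr rfl fun β _ => ?_
      rw [conjTranspose_smul, conjTranspose_mul, conjTranspose_mul,
        conjTranspose_conjTranspose, h1, h1]
      rw [mul_assoc]
      rfl
    rw [e1, Finset.sum_comm]
  exact coeff_unique F h1 h2 LL c hc _ hrep2

include h1 h2 hc in
lemma c_symm (hsymt : ∀ a b, (LL a * b).trace = (a * LL b).trace) :
    ∀ α β, c α β = c β α := by
  have hrep2 : ∀ b, LL b = ∑ α, ∑ β, c β α • (F α * b * F β) := by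
    intro b
    have key : ∀ X : Matrix (Fin n) (Fin n) ℂ,
        (∀ a : Matrix (Fin n) (Fin n) ℂ, (a * X).trace = 0) → X = 0 :=
      eq_zero_of_trace_mul
    have hz : LL b - ∑ α, ∑ β, c β α • (F α * b * F β) = 0 := by
      apply key
      intro a
      rw [mul_sub, trace_sub]
      have e1 : (a * ∑ α, ∑ β, c β α • (F α * b * F β)).trace
          = ∑ α, ∑ β, c β α * (a * (F α * b * F β)).trace := by
        rw [Finset.mul_sum, trace_sum]
        refine Finset.sum_congr rfl fun α _ => ?_
        rw [Finset.mul_sum, trace_sum]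
        refine Finset.sum_congr rfl fun β _ => ?_
        rw [mul_smul_comm, trace_smul, smul_eq_mul]
      have e2 : (a * LL b).trace = ∑ α, ∑ β, c α β * ((F α * a * F β) * b).trace := by
        rw [← hsymt a b, hc a, Finset.sum_mul, trace_sum]
        refine Finset.sum_congr rfl fun α _ => ?_
        rw [Finset.sum_mul, trace_sum]
        refine Finset.sum_congr rfl fun β _ => ?_
        rw [smul_mul_assoc, trace_smul, smul_eq_mul]
      rw [e1, e2]
      rw [sub_eq_zero]
      rw [Finset.sum_comm]
      refine Finset.sum_congr rfl fun α _ => Finset.sum_congr rfl fun β _ => ?_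
      congr 1
      -- trace (F β * a * F α * b) = trace (a * (F α * b * F β))
      rw [show F β * a * F α * b = (F β) * ((a * F α * b)) by noncomm_ring,
        trace_mul_comm, show a * F α * b * F β = a * (F α * b * F β) by noncomm_ring]
    exact sub_eq_zero.mp hz
  exact coeff_unique F h1 h2 LL c hc _ hrep2

include h1 h2 hc in
lemma c_psd (hn : 0 < n) (h3 : ∀ α, α ≠ ((⟨0,hn⟩ : Fin n),(⟨0,hn⟩ : Fin n)) → (F α).trace = 0)
    (hccp : ∀ (m : ℕ) (x : Fin m → Matrix (Fin n) (Fin n) ℂ) (u : Fin m → Fin n → ℂ),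
      (∑ i, (x i).mulVec (u i)) = 0 →
      0 ≤ (∑ i, ∑ j, star (u i) ⬝ᵥ (LL ((x i)ᴴ * x j)).mulVec (u j)).re)
    (w : Fin n × Fin n → ℂ) (hw : w ((⟨0,hn⟩ : Fin n),(⟨0,hn⟩ : Fin n)) = 0) :
    0 ≤ (∑ α, ∑ β, (starRingEnd ℂ) (w α) * c α β * w β).re := by
  set z : Fin n := ⟨0, hn⟩ with hzdef
  set G : Matrix (Fin n) (Fin n) ℂ := ∑ β, w β • F β with hG
  have hGH : Gᴴ = ∑ α, (starRingEnd ℂ) (w α) • F α := by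
    rw [hG, conjTranspose_sum]
    refine Finset.sum_congr rfl fun α _ => ?_
    rw [conjTranspose_smul, h1]
    rfl
  have htrG : G.trace = 0 := by
    rw [hG, trace_sum]
    refine Finset.sum_eq_zero fun α _ => ?_
    rw [trace_smul]
    by_cases hα : α = (z, z)
    · subst hα; rw [hw]; simp
    · rw [h3 α hα]; simp
  have key : ∀ (Z : Matrix (Fin n) (Fin n) ℂ) (p q : Fin n),
      ((Gᴴ * Z * G : Matrix (Fin n) (Fin n) ℂ)) p q
      = ∑ α, ∑ β, (starRingEnd ℂ) (w α)
          * ((F α * Z * F β : Matrix (Fin n) (Fin n) ℂ)) p q * w β := by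
    intro Z p q
    have e1 : Gᴴ * Z * G = ∑ α, ∑ β,
        ((starRingEnd ℂ) (w α) * w β) • (F α * Z * F β) := by
      rw [hGH, hG, Finset.sum_mul, Finset.sum_mul]
      refine Finset.sum_congr rfl fun α _ => ?_
      rw [Finset.mul_sum]
      refine Finset.sum_congr rfl fun β _ => ?_
      rw [smul_mul_assoc, smul_mul_assoc, mul_smul_comm, smul_smul]
    rw [e1, Matrix.sum_apply]
    refine Finset.sum_congr rfl fun α _ => ?_
    rw [Matrix.sum_apply]
    refine Finset.sum_congr rfl fun β _ => ?_
    rw [Matrix.smul_apply, smul_eq_mul]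
    ring
  have main : (∑ α, ∑ β, (starRingEnd ℂ) (w α) * c α β * w β)
      = ∑ p, ∑ q, ((Gᴴ * (LL (Eb p q)) * G : Matrix (Fin n) (Fin n) ℂ)) p q := by
    have e2 : ∀ α β : Fin n × Fin n, (starRingEnd ℂ) (w α) * c α β * w β
        = ∑ p, ∑ q, (starRingEnd ℂ) (w α)
            * ((F α * LL (Eb p q) * F β : Matrix (Fin n) (Fin n) ℂ)) p q * w β := by
      intro α β
      rw [c_formula F h1 h2 LL c hc α β, Finset.mul_sum, Finset.sum_mul]
      refine Finset.sum_congr rfl fun p _ => ?_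
      rw [Finset.mul_sum, Finset.sum_mul]
    rw [Finset.sum_congr rfl fun α (_ : α ∈ Finset.univ) =>
      Finset.sum_congr rfl fun β (_ : β ∈ Finset.univ) => e2 α β]
    rw [Finset.sum_congr rfl fun p (_ : p ∈ Finset.univ) =>
      Finset.sum_congr rfl fun q (_ : q ∈ Finset.univ) => key (LL (Eb p q)) p q]
    -- swap: ∑α∑β∑p∑q → ∑p∑q∑α∑β
    calc ∑ α : Fin n × Fin n, ∑ β : Fin n × Fin n, ∑ p, ∑ q, (starRingEnd ℂ) (w α)
            * ((F α * LL (Eb p q) * F β : Matrix (Fin n) (Fin n) ℂ)) p q * w β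
        = ∑ α : Fin n × Fin n, ∑ p, ∑ β : Fin n × Fin n, ∑ q, (starRingEnd ℂ) (w α)
            * ((F α * LL (Eb p q) * F β : Matrix (Fin n) (Fin n) ℂ)) p q * w β :=
          Finset.sum_congr rfl fun α _ => Finset.sum_comm
      _ = ∑ p, ∑ α : Fin n × Fin n, ∑ β : Fin n × Fin n, ∑ q, (starRingEnd ℂ) (w α)
            * ((F α * LL (Eb p q) * F β : Matrix (Fin n) (Fin n) ℂ)) p q * w β :=
          Finset.sum_comm
      _ = ∑ p, ∑ α : Fin n × Fin n, ∑ q, ∑ β : Fin n × Fin n, (starRingEnd ℂ) (w α)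
            * ((F α * LL (Eb p q) * F β : Matrix (Fin n) (Fin n) ℂ)) p q * w β :=
          Finset.sum_congr rfl fun p _ => Finset.sum_congr rfl fun α _ => Finset.sum_comm
      _ = ∑ p, ∑ q, ∑ α : Fin n × Fin n, ∑ β : Fin n × Fin n, (starRingEnd ℂ) (w α)
            * ((F α * LL (Eb p q) * F β : Matrix (Fin n) (Fin n) ℂ)) p q * w β :=
          Finset.sum_congr rfl fun p _ => Finset.sum_comm
  have dot : ∀ (Z : Matrix (Fin n) (Fin n) ℂ) (p q : Fin n),
      star (fun i => G i p) ⬝ᵥ Z.mulVec (fun i => G i q)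
      = ((Gᴴ * Z * G : Matrix (Fin n) (Fin n) ℂ)) p q := by
    intro Z p q
    rw [entry_mul_mul]
    rw [dotProduct]
    refine Finset.sum_congr rfl fun a _ => ?_
    rw [Pi.star_apply, mulVec, dotProduct, Finset.mul_sum]
    refine Finset.sum_congr rfl fun b _ => ?_
    rw [conjTranspose_apply]
    ring
  have hx : (∑ p, (Eb z p).mulVec (fun i => G i p)) = 0 := by
    funext i
    rw [Finset.sum_apply]
    have e3 : ∀ p, (Eb z p).mulVec (fun i => G i p) i
        = if i = z then G p p else 0 := by
      intro p
      rw [single_mulVec]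
      simp [Function.update_apply]
    rw [Finset.sum_congr rfl fun p _ => e3 p]
    have e3b : (∑ p, (if i = z then G p p else 0)) = if i = z then G.trace else 0 := by
      split_ifs with h
      · rw [trace]; rfl
      · simp
    rw [e3b, htrG]
    simp
  have happ := hccp n (fun p => Eb z p) (fun p => fun i => G i p) hx
  have e4 : ∀ p q : Fin n, (Eb z p)ᴴ * Eb z q = Eb p q := by
    intro p q
    rw [Eb_conjTranspose, Eb_mul_Eb, if_pos rfl]
  have e5 : (∑ p, ∑ q, star (fun i => G i p) ⬝ᵥ
        (LL ((Eb z p)ᴴ * Eb z q)).mulVec (fun i => G i q))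
      = ∑ α, ∑ β, (starRingEnd ℂ) (w α) * c α β * w β := by
    rw [main]
    refine Finset.sum_congr rfl fun p _ => Finset.sum_congr rfl fun q _ => ?_
    rw [e4 p q, dot]
  rw [e5] at happ
  exact happ

end Main

open scoped MatrixOrder in
lemma exists_sqrt_real {m : Type*} [Fintype m] [DecidableEq m] (A : Matrix m m ℝ)
    (hA : A.PosSemidef) : ∃ S : Matrix m m ℝ, S.IsHermitian ∧ S * S = A :=
  ⟨CFC.sqrt A, (CFC.sqrt_nonneg A).posSemidef.1, CFC.sqrt_mul_sqrt_self A hA.nonneg⟩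

end Stmt15

open Stmt15 in
set_option maxHeartbeats 2000000 in
/-- (Lindblad structure of symmetric conservative generators on `M_n(ℂ)`.)
If a ℂ-linear map `𝓛` on `M_n(ℂ)` is (i) star-preserving, (ii) annihilates the identity,
(iii) conditionally completely positive, and (iv) symmetric with respect to the trace, then
there exist `β_1, …, β_k` with `β_jᴴ = -β_j`, `trace β_j = 0`, and
`𝓛(a) = (1/2) ∑_j [β_j,[β_j,a]]`. -/
theorem stmt_15 (n : ℕ) (hn : 0 < n)
    (𝓛 : Matrix (Fin n) (Fin n) ℂ →ₗ[ℂ] Matrix (Fin n) (Fin n) ℂ)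
    (hstar : ∀ x : Matrix (Fin n) (Fin n) ℂ, 𝓛 xᴴ = (𝓛 x)ᴴ)
    (hunital : 𝓛 1 = 0)
    (hccp : ∀ (m : ℕ) (x : Fin m → Matrix (Fin n) (Fin n) ℂ) (u : Fin m → Fin n → ℂ),
      (∑ i, (x i).mulVec (u i)) = 0 →
      0 ≤ (∑ i, ∑ j, star (u i) ⬝ᵥ (𝓛 ((x i)ᴴ * x j)).mulVec (u j)).re)
    (hsym : ∀ a b : Matrix (Fin n) (Fin n) ℂ, (𝓛 a * b).trace = (a * 𝓛 b).trace) :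
    ∃ (k : ℕ) (β : Fin k → Matrix (Fin n) (Fin n) ℂ),
      (∀ j, (β j)ᴴ = -(β j) ∧ (β j).trace = 0) ∧
      ∀ a : Matrix (Fin n) (Fin n) ℂ,
        𝓛 a = (1 / 2 : ℂ) •
          ∑ j, (β j * (β j * a - a * β j) - (β j * a - a * β j) * β j) := by
  classical
  obtain ⟨F, h1, h2, h3, t, hFo⟩ := exists_good_basis n hn
  set o : Fin n × Fin n := (⟨0,hn⟩, ⟨0,hn⟩) with ho
  set c : Fin n × Fin n → Fin n × Fin n → ℂ :=
    fun α β => ∑ p, ∑ q, ((F α * 𝓛 (Eb p q) * F β : Matrix (Fin n) (Fin n) ℂ)) p q with hcdef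
  have hc : ∀ a, 𝓛 a = ∑ α, ∑ β, c α β • (F α * a * F β) := fun a => rep F h1 h2 𝓛 a
  have hherm : ∀ α β, c α β = (starRingEnd ℂ) (c β α) := c_herm F h1 h2 𝓛 c hc hstar
  have hsymm : ∀ α β, c α β = c β α := c_symm F h1 h2 𝓛 c hc hsym
  have hreal : ∀ α β, (starRingEnd ℂ) (c α β) = c α β := by
    intro α β
    have e := congrArg (starRingEnd ℂ) (hherm α β)
    rw [Complex.conj_conj] at e
    exact e.trans (hsymm β α)
  set ctil : Matrix (Fin n × Fin n) (Fin n × Fin n) ℝ :=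
    Matrix.of (fun α β => if α = o ∨ β = o then 0 else (c α β).re) with hctil
  have hctilsym : ∀ α β, ctil α β = ctil β α := by
    intro α β
    show (if α = o ∨ β = o then (0:ℝ) else (c α β).re)
      = (if β = o ∨ α = o then (0:ℝ) else (c β α).re)
    rw [hsymm α β]
    exact if_congr or_comm rfl rfl
  have hctilo : ∀ α β, α = o ∨ β = o → ctil α β = 0 := by
    intro α β hh
    show (if α = o ∨ β = o then (0:ℝ) else (c α β).re) = 0
    rw [if_pos hh]
  have hctilval : ∀ α β, ¬(α = o ∨ β = o) → ((ctil α β : ℝ) : ℂ) = c α β := by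
    intro α β hh
    show (((if α = o ∨ β = o then (0:ℝ) else (c α β).re) : ℝ) : ℂ) = c α β
    rw [if_neg hh]
    exact Complex.conj_eq_iff_re.mp (hreal α β)
  have hpsd : ctil.PosSemidef := by
    refine PosSemidef.of_dotProduct_mulVec_nonneg ?_ ?_
    · ext α β
      rw [conjTranspose_apply]
      show star (ctil β α) = ctil α β
      rw [star_trivial, hctilsym]
    · intro x
      set w : Fin n × Fin n → ℂ := fun α => if α = o then 0 else ((x α : ℝ) : ℂ) with hwdef
      have hw : w o = 0 := by simp [hwdef]
      have hp := c_psd F h1 h2 𝓛 c hc hn h3 hccp w hw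
      have expand : star x ⬝ᵥ ctil *ᵥ x = ∑ α, ∑ β, x α * ctil α β * x β := by
        rw [show star x = x from funext fun α => star_trivial _, dotProduct]
        refine Finset.sum_congr rfl fun α _ => ?_
        rw [mulVec, dotProduct, Finset.mul_sum]
        refine Finset.sum_congr rfl fun β _ => ?_
        ring
      have match1 : (∑ α, ∑ β, (starRingEnd ℂ) (w α) * c α β * w β).re
          = ∑ α, ∑ β, x α * ctil α β * x β := by
        rw [Complex.re_sum]
        refine Finset.sum_congr rfl fun α _ => ?_
        rw [Complex.re_sum]
        refine Finset.sum_congr rfl fun β _ => ?_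
        by_cases hh : α = o ∨ β = o
        · rw [hctilo α β hh]
          rcases hh with hh | hh
          · have : w α = 0 := by simp [hwdef, hh]
            rw [this]
            simp
          · have : w β = 0 := by simp [hwdef, hh]
            rw [this]
            simp
        · push_neg at hh
          have hwα : w α = ((x α : ℝ) : ℂ) := by simp [hwdef, hh.1]
          have hwβ : w β = ((x β : ℝ) : ℂ) := by simp [hwdef, hh.2]
          rw [hwα, hwβ, Complex.conj_ofReal]
          have e9 : ((x α : ℝ) : ℂ) * c α β * ((x β : ℝ) : ℂ)
              = ((x α * x β : ℝ) : ℂ) * c α β := by push_cast; ring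
          rw [e9, Complex.re_ofReal_mul]
          have : ctil α β = (c α β).re := by
            show (if α = o ∨ β = o then (0:ℝ) else (c α β).re) = (c α β).re
            rw [if_neg (by tauto)]
          rw [this]
          ring
      rw [expand, ← match1]
      exact hp
  obtain ⟨S, hSherm, hSS'⟩ := exists_sqrt_real ctil hpsd
  have hSsym : ∀ γ α, S γ α = S α γ := by
    intro γ α
    have := hSherm.apply γ α
    rw [star_trivial] at this
    exact this.symm
  have hSS : S * S = ctil := hSS'
  have hSo : ∀ γ, S γ o = 0 := by
    have h00 : (S * S) o o = 0 := by rw [hSS]; exact hctilo o o (Or.inl rfl)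
    rw [mul_apply] at h00
    have hnn : ∀ γ ∈ Finset.univ, (0:ℝ) ≤ S o γ * S γ o := by
      intro γ _
      rw [hSsym o γ]
      exact mul_self_nonneg _
    have hz := (Finset.sum_eq_zero_iff_of_nonneg hnn).mp h00
    intro γ
    have hγ := hz γ (Finset.mem_univ γ)
    rw [hSsym o γ] at hγ
    exact mul_self_eq_zero.mp hγ
  set L : Fin n × Fin n → Matrix (Fin n) (Fin n) ℂ :=
    fun γ => ∑ α, ((S γ α : ℝ) : ℂ) • F α with hLdef
  have hLherm : ∀ γ, (L γ)ᴴ = L γ := by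
    intro γ
    show (∑ α, ((S γ α : ℝ) : ℂ) • F α)ᴴ = ∑ α, ((S γ α : ℝ) : ℂ) • F α
    rw [conjTranspose_sum]
    refine Finset.sum_congr rfl fun α _ => ?_
    rw [conjTranspose_smul, h1, Complex.star_def, Complex.conj_ofReal]
  have hLtr : ∀ γ, (L γ).trace = 0 := by
    intro γ
    show (∑ α, ((S γ α : ℝ) : ℂ) • F α).trace = 0
    rw [trace_sum]
    refine Finset.sum_eq_zero fun α _ => ?_
    rw [trace_smul]
    by_cases hα : α = o
    · subst hα
      rw [hSo γ]
      simp
    · rw [h3 α hα]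
      simp
  have hLL : ∀ a, (∑ γ, L γ * a * L γ)
      = ∑ α, ∑ β, ((ctil α β : ℝ) : ℂ) • (F α * a * F β) := by
    intro a
    have e1 : ∀ γ, L γ * a * L γ
        = ∑ α, ∑ β, ((S γ α * S γ β : ℝ) : ℂ) • (F α * a * F β) := by
      intro γ
      show (∑ α, ((S γ α : ℝ) : ℂ) • F α) * a * (∑ β, ((S γ β : ℝ) : ℂ) • F β) = _
      rw [Finset.sum_mul, Finset.sum_mul]
      refine Finset.sum_congr rfl fun α _ => ?_
      rw [Finset.mul_sum]
      refine Finset.sum_congr rfl fun β _ => ?_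
      rw [smul_mul_assoc, smul_mul_assoc, mul_smul_comm, smul_smul]
      congr 1
      push_cast
      ring
    rw [Finset.sum_congr rfl fun γ (_ : γ ∈ Finset.univ) => e1 γ]
    rw [Finset.sum_comm]
    refine Finset.sum_congr rfl fun α _ => ?_
    rw [Finset.sum_comm]
    refine Finset.sum_congr rfl fun β _ => ?_
    rw [← Finset.sum_smul]
    congr 1
    rw [← Complex.ofReal_sum]
    congr 1
    rw [← hSS, mul_apply]
    exact Finset.sum_congr rfl fun γ _ => by rw [hSsym γ α]
  set Mm : Matrix (Fin n) (Fin n) ℂ := ∑ γ, L γ * L γ with hMmdef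
  have hsplit : ∃ P Q : Matrix (Fin n) (Fin n) ℂ, ∀ a, 𝓛 a
      = (∑ α, ∑ β, ((ctil α β : ℝ) : ℂ) • (F α * a * F β)) + (a * P + Q * a) := by
    refine ⟨t • ∑ β, c o β • F β, t • ∑ α ∈ Finset.univ.erase o, c α o • F α, fun a => ?_⟩
    rw [hc a]
    have hdecomp : ∀ α β : Fin n × Fin n, c α β • (F α * a * F β)
        = ((ctil α β : ℝ) : ℂ) • (F α * a * F β)
          + (if α = o ∨ β = o then c α β else 0) • (F α * a * F β) := by
      intro α β
      rw [← add_smul]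
      congr 1
      by_cases hh : α = o ∨ β = o
      · rw [if_pos hh, hctilo α β hh]
        norm_num
      · rw [if_neg hh, hctilval α β hh, add_zero]
    rw [Finset.sum_congr rfl fun α (_ : α ∈ Finset.univ) =>
      Finset.sum_congr rfl fun β (_ : β ∈ Finset.univ) => hdecomp α β]
    rw [Finset.sum_congr rfl fun α (_ : α ∈ Finset.univ) =>
      (Finset.sum_add_distrib : _ = _)]
    rw [Finset.sum_add_distrib]
    congr 1
    rw [← Finset.add_sum_erase _ _ (Finset.mem_univ o)]
    congr 1
    · have e1 : ∀ β, (if o = o ∨ β = o then c o β else 0) • (F o * a * F β)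
          = c o β • (t • (a * F β)) := by
        intro β
        rw [if_pos (Or.inl rfl), hFo, smul_mul_assoc, one_mul, smul_mul_assoc]
      rw [Finset.sum_congr rfl fun β (_ : β ∈ Finset.univ) => e1 β]
      rw [mul_smul_comm, Finset.mul_sum, Finset.smul_sum]
      refine Finset.sum_congr rfl fun β _ => ?_
      rw [mul_smul_comm, smul_smul, smul_smul, mul_comm t (c o β)]
    · have e2 : ∀ α ∈ Finset.univ.erase o,
          (∑ β, (if α = o ∨ β = o then c α β else 0) • (F α * a * F β))
          = c α o • (t • (F α * a)) := by
        intro α hα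
        have hαo : α ≠ o := Finset.ne_of_mem_erase hα
        rw [Finset.sum_eq_single o]
        · rw [if_pos (Or.inr rfl), hFo, mul_smul_comm, mul_one]
        · intro β _ hβ
          rw [if_neg (by tauto), zero_smul]
        · intro h; exact absurd (Finset.mem_univ o) h
      rw [Finset.sum_congr rfl e2]
      rw [smul_mul_assoc, Finset.sum_mul, Finset.smul_sum]
      refine Finset.sum_congr rfl fun α _ => ?_
      rw [smul_mul_assoc, smul_smul, smul_smul, mul_comm t (c α o)]
  obtain ⟨P, Q, hPQ⟩ := hsplit
  have hLa : ∀ a, 𝓛 a = (∑ γ, L γ * a * L γ) + (a * P + Q * a) := by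
    intro a
    rw [hPQ a, hLL a]
  set P2 : Matrix (Fin n) (Fin n) ℂ := P + (2:ℂ)⁻¹ • Mm with hP2def
  set Q2 : Matrix (Fin n) (Fin n) ℂ := Q + (2:ℂ)⁻¹ • Mm with hQ2def
  have hD : ∀ a, 𝓛 a = ((∑ γ, L γ * a * L γ) - (2:ℂ)⁻¹ • (Mm * a + a * Mm))
      + (a * P2 + Q2 * a) := by
    intro a
    rw [hLa a, hP2def, hQ2def]
    rw [mul_add, add_mul, smul_mul_assoc, mul_smul_comm, smul_add]
    abel
  have hQ2 : Q2 = -P2 := by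
    have e1 := hD 1
    rw [hunital] at e1
    have e2 : (∑ γ, L γ * 1 * L γ) = Mm := by
      rw [hMmdef]
      exact Finset.sum_congr rfl fun γ _ => by rw [mul_one]
    rw [e2] at e1
    simp only [mul_one, one_mul] at e1
    have e3 : (2:ℂ)⁻¹ • (Mm + Mm) = Mm := by
      rw [← two_smul ℂ Mm, smul_smul]
      norm_num
    rw [e3, sub_self, zero_add] at e1
    exact eq_neg_of_add_eq_zero_right e1.symm
  have hDsym : ∀ a b, ((((∑ γ, L γ * a * L γ) - (2:ℂ)⁻¹ • (Mm * a + a * Mm)) * b).trace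
      = (a * ((∑ γ, L γ * b * L γ) - (2:ℂ)⁻¹ • (Mm * b + b * Mm))).trace) := by
    intro a b
    rw [sub_mul, trace_sub, mul_sub, trace_sub]
    congr 1
    · rw [Finset.sum_mul, trace_sum, Finset.mul_sum, trace_sum]
      refine Finset.sum_congr rfl fun γ _ => ?_
      rw [show L γ * a * L γ * b = L γ * (a * L γ * b) by noncomm_ring,
        trace_mul_comm, show a * L γ * b * L γ = a * (L γ * b * L γ) by noncomm_ring]
    · rw [smul_mul_assoc, trace_smul, mul_smul_comm, trace_smul]
      congr 1
      rw [add_mul, mul_add, trace_add, trace_add]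
      have t1 : (Mm * a * b).trace = (a * (b * Mm)).trace := by
        rw [trace_mul_cycle, trace_mul_cycle, mul_assoc]
      have t2 : (a * Mm * b).trace = (a * (Mm * b)).trace := by rw [mul_assoc]
      rw [t1, t2]
      ring
  have hRsym : ∀ a b, ((a * P2 - P2 * a) * b).trace = (a * (b * P2 - P2 * b)).trace := by
    intro a b
    have e1 := hsym a b
    rw [hD a, hD b] at e1
    have e2 := hDsym a b
    have hRa : a * P2 + Q2 * a = a * P2 - P2 * a := by
      rw [hQ2]; rw [neg_mul]; abel
    have hRb : b * P2 + Q2 * b = b * P2 - P2 * b := by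
      rw [hQ2]; rw [neg_mul]; abel
    rw [hRa] at e1
    rw [hRb] at e1
    simp only [add_mul, mul_add, trace_add] at e1
    linear_combination e1 - e2
  have hcentral : ∀ bb, P2 * bb = bb * P2 := by
    intro bb
    have hz : ∀ a, (a * (P2 * bb - bb * P2)).trace = 0 := by
      intro a
      have e := hRsym a bb
      rw [sub_mul, trace_sub, mul_sub, trace_sub] at e
      have c1 : (P2 * a * bb).trace = (a * (bb * P2)).trace := by
        rw [trace_mul_cycle, trace_mul_cycle, mul_assoc]
      have c2 : (a * P2 * bb).trace = (a * (P2 * bb)).trace := by rw [mul_assoc]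
      rw [c1, c2] at e
      rw [mul_sub, trace_sub]
      linear_combination e / 2
    have := eq_zero_of_trace_mul _ hz
    exact sub_eq_zero.mp this
  have hfinal : ∀ a, 𝓛 a = (∑ γ, L γ * a * L γ) - (2:ℂ)⁻¹ • (Mm * a + a * Mm) := by
    intro a
    rw [hD a, hQ2]
    have : a * P2 + -P2 * a = 0 := by
      rw [neg_mul, ← sub_eq_add_neg, ← hcentral a, sub_self]
    rw [this, add_zero]
  refine ⟨n*n, fun j => Complex.I • L (finProdFinEquiv.symm j), ?_, ?_⟩
  · intro j
    constructor
    · rw [conjTranspose_smul, hLherm, Complex.star_def, Complex.conj_I, neg_smul]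
    · rw [trace_smul, hLtr, smul_zero]
  · intro a
    rw [hfinal a]
    have hBsum : (∑ j : Fin (n*n),
          (Complex.I • L (finProdFinEquiv.symm j)
              * (Complex.I • L (finProdFinEquiv.symm j) * a
                - a * (Complex.I • L (finProdFinEquiv.symm j)))
            - (Complex.I • L (finProdFinEquiv.symm j) * a
                - a * (Complex.I • L (finProdFinEquiv.symm j)))
              * (Complex.I • L (finProdFinEquiv.symm j))))
        = ∑ γ : Fin n × Fin n,
          (Complex.I • L γ * (Complex.I • L γ * a - a * (Complex.I • L γ))
            - (Complex.I • L γ * a - a * (Complex.I • L γ)) * (Complex.I • L γ)) :=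
      Equiv.sum_comp (finProdFinEquiv.symm : Fin (n*n) ≃ Fin n × Fin n)
        (fun γ => Complex.I • L γ * (Complex.I • L γ * a - a * (Complex.I • L γ))
          - (Complex.I • L γ * a - a * (Complex.I • L γ)) * (Complex.I • L γ))
    have hper : ∀ γ : Fin n × Fin n,
        (Complex.I • L γ * (Complex.I • L γ * a - a * (Complex.I • L γ))
          - (Complex.I • L γ * a - a * (Complex.I • L γ)) * (Complex.I • L γ))
        = (2:ℂ) • (L γ * a * L γ) - (L γ * L γ * a + a * (L γ * L γ)) := by
      intro γ
      have hBB : (Complex.I • L γ) * (Complex.I • L γ) = -(L γ * L γ) := by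
        rw [smul_mul_smul_comm, Complex.I_mul_I, neg_one_smul]
      have hBaB : (Complex.I • L γ) * a * (Complex.I • L γ) = -(L γ * a * L γ) := by
        rw [smul_mul_assoc, smul_mul_smul_comm, Complex.I_mul_I, neg_one_smul]
      have expand : ∀ B : Matrix (Fin n) (Fin n) ℂ,
          B * (B * a - a * B) - (B * a - a * B) * B
          = B * B * a - B * a * B - (B * a * B - a * (B * B)) := by
        intro B; noncomm_ring
      rw [expand (Complex.I • L γ), hBB, hBaB, two_smul]
      noncomm_ring
    rw [hBsum]
    rw [Finset.sum_congr rfl fun γ (_ : γ ∈ Finset.univ) => hper γ]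
    rw [Finset.sum_sub_distrib, Finset.sum_add_distrib]
    rw [← Finset.smul_sum, ← Finset.sum_mul, ← Finset.mul_sum, ← hMmdef]
    have e10 : ((1:ℂ)/2) • ((2:ℂ) • (∑ γ : Fin n × Fin n, L γ * a * L γ))
        = ∑ γ : Fin n × Fin n, L γ * a * L γ := by
      rw [smul_smul]
      norm_num
    rw [smul_sub, e10, one_div]
end
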